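/- Let O ⊆ ℝ × ℝ^m be open and let G : O → ℝ^m be differentiable, satisfying for all (t,x) ∈ O and all i ∈ [m] the implicit system G_i(t,x) = e^{−x_i} · exp( t ∑_{l=1}^m A_{il} p_l (G_l(t,x) − 1) ), and assume det( I − t·diag(G(t,x))·A·P ) ≠ 0 for all (t,x) ∈ O. Then G satisfies ∂G/∂t (t,x) = −(∇G(t,x)) A P (G(t,x) − 𝟙) on O, and consequently the function u : O → ℝ^m defined by u_i(t,x) = p_i G_i(t,x) satisfies ∂u/∂t (t,x) = −(∇u(t,x)) A (u(t,x) − p) on O. -/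

import Mathlib

/-- Partial derivative in the time variable of a map `G : ℝ × ℝ^m → ℝ^m` (componentwise). -/
noncomputable def pderivT {m : ℕ} (G : ℝ → (Fin m → ℝ) → Fin m → ℝ)
    (t : ℝ) (x : Fin m → ℝ) (i : Fin m) : ℝ :=
  fderiv ℝ (fun q : ℝ × (Fin m → ℝ) => G q.1 q.2 i) (t, x) (1, 0)

/-- Partial derivative in the `j`-th spatial variable of a map `G : ℝ × ℝ^m → ℝ^m`. -/
noncomputable def pderivX {m : ℕ} (G : ℝ → (Fin m → ℝ) → Fin m → ℝ)
    (t : ℝ) (x : Fin m → ℝ) (i j : Fin m) : ℝ :=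
  fderiv ℝ (fun q : ℝ × (Fin m → ℝ) => G q.1 q.2 i) (t, x) (0, Pi.single j 1)

/-!
Write `S = A P (G - 𝟙)`, so that `G_i = exp (-x_i + t S_i)`. Differentiating this identity in the
direction `(1, S)` of `(t, x)`-space, the `-S_i` coming from `x` cancels the `S_i` coming from `t`,
so `w = ∂G/∂t + (∇G) S` solves `w = t diag(G) A P w`. Since `I - t diag(G) A P` is invertible,
`w = 0`, which is the equation for `G`; the one for `u` follows because `A (u - p) = A P (G - 𝟙)`.
-/

open Filter Topology
open scoped Matrix

theorem map_prod_eq_smul_add_sum_single {R ι F M : Type*} [CommSemiring R] [Fintype ι]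
    [DecidableEq ι] [AddCommMonoid F] [Module R F] [FunLike M (R × (ι → R)) F]
    [LinearMapClass M R (R × (ι → R)) F] (L : M) (a : R) (v : ι → R) :
    L (a, v) = a • L (1, 0) + ∑ j, v j • L (0, Pi.single j 1) := by
  have hdecomp : (a, v) = a • ((1 : R), (0 : ι → R)) + ∑ j, v j • ((0 : R), Pi.single j 1) := by
    ext j <;> simp [Prod.fst_sum, Prod.snd_sum, Finset.sum_apply, Pi.single_apply]
  rw [hdecomp]
  simp only [map_add, map_smul, map_sum]

theorem Matrix.eq_zero_of_smul_mulVec_eq {ι R : Type*} [Fintype ι] [DecidableEq ι] [CommRing R]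
    [NoZeroDivisors R] {M : Matrix ι ι R} {t : R} (hdet : (1 - t • M).det ≠ 0) {w : ι → R}
    (hw : (t • M) *ᵥ w = w) : w = 0 :=
  Matrix.eq_zero_of_mulVec_eq_zero hdet (by rw [Matrix.sub_mulVec, hw, Matrix.one_mulVec, sub_self])

theorem Matrix.diagonal_mul_mul_diagonal_mulVec_apply {ι R : Type*} [Fintype ι] [DecidableEq ι]
    [CommSemiring R] (g p w : ι → R) (A : Matrix ι ι R) (i : ι) :
    ((Matrix.diagonal g * A * Matrix.diagonal p) *ᵥ w) i = g i * ∑ l, A i l * p l * w l := by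
  simp only [Matrix.mulVec, dotProduct, Matrix.mul_diagonal, Matrix.diagonal_mul, Finset.mul_sum]
  exact Finset.sum_congr rfl fun l _ => by ring

theorem fderiv_apply_of_implicit_system {m : ℕ} (A : Matrix (Fin m) (Fin m) ℝ) (p : Fin m → ℝ)
    (G : ℝ → (Fin m → ℝ) → Fin m → ℝ) {t : ℝ} {x : Fin m → ℝ} (i : Fin m)
    (hdiff : ∀ l, DifferentiableAt ℝ (fun q : ℝ × (Fin m → ℝ) => G q.1 q.2 l) (t, x))
    (hfix : ∀ᶠ q : ℝ × (Fin m → ℝ) in 𝓝 (t, x),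
      G q.1 q.2 i = Real.exp (-q.2 i) * Real.exp (q.1 * ∑ l, A i l * p l * (G q.1 q.2 l - 1)))
    (v : ℝ × (Fin m → ℝ)) :
    fderiv ℝ (fun q : ℝ × (Fin m → ℝ) => G q.1 q.2 i) (t, x) v
      = G t x i * (-v.2 i + v.1 * ∑ l, A i l * p l * (G t x l - 1)
          + t * ∑ l, A i l * p l * fderiv ℝ (fun q : ℝ × (Fin m → ℝ) => G q.1 q.2 l) (t, x) v) := by
  set dG := fun l => fderiv ℝ (fun q : ℝ × (Fin m → ℝ) => G q.1 q.2 l) (t, x)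
  have hsum : HasFDerivAt (fun q : ℝ × (Fin m → ℝ) => ∑ l, A i l * p l * (G q.1 q.2 l - 1))
      (∑ l, (A i l * p l) • dG l) (t, x) :=
    HasFDerivAt.fun_sum fun l _ => ((hdiff l).hasFDerivAt.sub_const 1).const_mul (A i l * p l)
  have hexponent : HasFDerivAt
      (fun q : ℝ × (Fin m → ℝ) => -q.2 i + q.1 * ∑ l, A i l * p l * (G q.1 q.2 l - 1))
      (-(ContinuousLinearMap.proj i).comp (ContinuousLinearMap.snd ℝ ℝ (Fin m → ℝ))
        + (t • ∑ l, (A i l * p l) • dG l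
          + (∑ l, A i l * p l * (G t x l - 1)) • ContinuousLinearMap.fst ℝ ℝ (Fin m → ℝ)))
      (t, x) :=
    ((hasFDerivAt_apply i x).comp (t, x) hasFDerivAt_snd).neg.add (hasFDerivAt_fst.mul hsum)
  have hG : (fun q : ℝ × (Fin m → ℝ) => G q.1 q.2 i) =ᶠ[𝓝 (t, x)]
      fun q => Real.exp (-q.2 i + q.1 * ∑ l, A i l * p l * (G q.1 q.2 l - 1)) :=
    hfix.mono fun q hq => by simp only [hq, Real.exp_add]
  rw [(hexponent.exp.congr_of_eventuallyEq hG).fderiv, ← hG.eq_of_nhds]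
  simp only [dG, smul_add, smul_neg, add_apply, neg_apply,
    smul_apply, ContinuousLinearMap.comp_apply, ContinuousLinearMap.coe_snd',
    ContinuousLinearMap.proj_apply, sum_apply, ContinuousLinearMap.coe_fst',
    smul_eq_mul]
  ring

theorem implicit_system_solves_pde_general
    (m : ℕ)
    (A : Matrix (Fin m) (Fin m) ℝ)
    (p : Fin m → ℝ)
    (O : Set (ℝ × (Fin m → ℝ))) (hO : IsOpen O)
    (G : ℝ → (Fin m → ℝ) → Fin m → ℝ)
    (hGdiff : ∀ t : ℝ, ∀ x : Fin m → ℝ, (t, x) ∈ O → ∀ i : Fin m,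
      DifferentiableAt ℝ (fun q : ℝ × (Fin m → ℝ) => G q.1 q.2 i) (t, x))
    (hGfix : ∀ t : ℝ, ∀ x : Fin m → ℝ, (t, x) ∈ O → ∀ i : Fin m,
      G t x i = Real.exp (-x i) *
        Real.exp (t * ∑ l, A i l * p l * (G t x l - 1)))
    (hdet : ∀ t : ℝ, ∀ x : Fin m → ℝ, (t, x) ∈ O →
      ((1 : Matrix (Fin m) (Fin m) ℝ)
        - t • (Matrix.diagonal (G t x) * A * Matrix.diagonal p)).det ≠ 0) :
    ∀ t : ℝ, ∀ x : Fin m → ℝ, (t, x) ∈ O →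
      -- ∂G/∂t = -(∇G) A P (G - 𝟙)
      (∀ i : Fin m,
        pderivT G t x i
          = -∑ j, pderivX G t x i j * (∑ k, A j k * p k * (G t x k - 1)))
      ∧
      -- consequently, u := (p_i G_i)_i satisfies ∂u/∂t = -(∇u) A (u - p)
      (∀ i : Fin m,
        p i * pderivT G t x i
          = -∑ j, (p i * pderivX G t x i j) * (∑ k, A j k * (p k * G t x k - p k))) := by
  intro t x hmem
  set S : Fin m → ℝ := fun j => ∑ k, A j k * p k * (G t x k - 1)
  set dG := fun i => fderiv ℝ (fun q : ℝ × (Fin m → ℝ) => G q.1 q.2 i) (t, x)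
  have hderiv (i : Fin m) := fderiv_apply_of_implicit_system A p G i (hGdiff t x hmem)
    (eventually_of_mem (hO.mem_nhds hmem) fun q hq => hGfix q.1 q.2 hq i)
  have hchar : (fun i => dG i (1, S)) = 0 := by
    refine Matrix.eq_zero_of_smul_mulVec_eq (hdet t x hmem) (funext fun i => ?_)
    rw [Matrix.smul_mulVec, Pi.smul_apply, Matrix.diagonal_mul_mul_diagonal_mulVec_apply,
      hderiv i (1, S)]
    simp only [S, smul_eq_mul, dG]
    ring
  have hpde (i : Fin m) : pderivT G t x i = -∑ j, pderivX G t x i j * S j := by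
    have hsplit := map_prod_eq_smul_add_sum_single (dG i) 1 S
    rw [congr_fun hchar i, Pi.zero_apply, one_smul] at hsplit
    simp only [smul_eq_mul, dG] at hsplit
    simp only [pderivT, pderivX, mul_comm _ (S _)]
    linarith
  have hS (j : Fin m) : ∑ k, A j k * (p k * G t x k - p k) = S j :=
    Finset.sum_congr rfl fun k _ => by ring
  refine ⟨hpde, fun i => ?_⟩
  simp only [hS, hpde, mul_neg, Finset.mul_sum, mul_assoc]

/-- A differentiable solution of the implicit system
`G_i = e^{-x_i} exp(t ∑_l A_{il} p_l (G_l - 1))` on an open set on which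
`det(I - t·diag(G)·A·P) ≠ 0` satisfies `∂G/∂t = -(∇G) A P (G - 𝟙)`; consequently
`u_i = p_i G_i` satisfies the Burgers-type PDE `∂u/∂t = -(∇u) A (u - p)`. -/
theorem implicit_system_solves_pde
    (m : ℕ) (hm : 1 ≤ m)
    (A : Matrix (Fin m) (Fin m) ℝ) (hAsymm : A.IsSymm) (hA0 : ∀ i j, 0 ≤ A i j)
    (p : Fin m → ℝ) (hp0 : ∀ i, 0 ≤ p i) (hp1 : ∑ i, p i = 1)
    (O : Set (ℝ × (Fin m → ℝ))) (hO : IsOpen O)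
    (G : ℝ → (Fin m → ℝ) → Fin m → ℝ)
    (hGdiff : ∀ t : ℝ, ∀ x : Fin m → ℝ, (t, x) ∈ O → ∀ i : Fin m,
      DifferentiableAt ℝ (fun q : ℝ × (Fin m → ℝ) => G q.1 q.2 i) (t, x))
    (hGfix : ∀ t : ℝ, ∀ x : Fin m → ℝ, (t, x) ∈ O → ∀ i : Fin m,
      G t x i = Real.exp (-x i) *
        Real.exp (t * ∑ l, A i l * p l * (G t x l - 1)))
    (hdet : ∀ t : ℝ, ∀ x : Fin m → ℝ, (t, x) ∈ O →
      ((1 : Matrix (Fin m) (Fin m) ℝ)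
        - t • (Matrix.diagonal (G t x) * A * Matrix.diagonal p)).det ≠ 0) :
    ∀ t : ℝ, ∀ x : Fin m → ℝ, (t, x) ∈ O →
      -- ∂G/∂t = -(∇G) A P (G - 𝟙)
      (∀ i : Fin m,
        pderivT G t x i
          = -∑ j, pderivX G t x i j * (∑ k, A j k * p k * (G t x k - 1)))
      ∧
      -- consequently, u := (p_i G_i)_i satisfies ∂u/∂t = -(∇u) A (u - p)
      (∀ i : Fin m,
        p i * pderivT G t x i
          = -∑ j, (p i * pderivX G t x i j) * (∑ k, A j k * (p k * G t x k - p k))) :=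
  implicit_system_solves_pde_general m A p O hO G hGdiff hGfix hdet
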